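/- Let ‖·‖ be a homogeneous pseudo-length function on a group G. Then ‖x‖ = 0 for every element x of the commutator subgroup [G,G]; consequently, ‖x‖ = ‖y‖ whenever x·y⁻¹ ∈ [G,G], i.e., ‖·‖ factors through the abelianization of G. -/

import Mathlib

/-!
Let `f` be a group seminorm with `f (x ^ n) = n * f x`. Homogeneity makes bounded errors vanish
in the limit: `n * f (g * x * g⁻¹) = f (g * x ^ n * g⁻¹) ≤ n * f x + 2 * f g` for all `n`, so `f`
is conjugation invariant and hence `f (x * y) = f (y * x)`. Comparing `x ^ (2 * n)` with
`x ^ n * (t * x * t⁻¹) ^ n` in the same way gives `2 * f x ≤ f (x * (t * x * t⁻¹))`. Since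
`⁅a, t⁆ * (t * ⁅a, t⁆ * t⁻¹) = ⁅a, t ^ 2⁆`, this yields `2 ^ k * f ⁅a, b⁆ ≤ f ⁅a, b ^ 2 ^ k⁆`,
while `f ⁅a, t⁆ ≤ 2 * f a` for every `t`; so `f ⁅a, b⁆ = 0`.
-/

open scoped commutatorElement

theorem le_of_forall_nat_mul_le_mul_add {α : Type*} [Field α] [LinearOrder α]
    [IsStrictOrderedRing α] [Archimedean α] {a b c : α} (h : ∀ n : ℕ, n * a ≤ n * b + c) :
    a ≤ b := by
  by_contra! hba
  obtain ⟨n, hn⟩ := exists_nat_gt (c / (a - b))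
  have := h n
  rw [div_lt_iff₀ (sub_pos.2 hba)] at hn
  nlinarith

namespace GroupSeminormClass

variable {F G : Type*} [Group G] [FunLike F G ℝ] [GroupSeminormClass F G ℝ] {f : F}

variable (f) in
def IsHomogeneous : Prop := ∀ (x : G) (n : ℕ), f (x ^ n) = n * f x

theorem map_conj (hf : IsHomogeneous f) (g x : G) : f (g * x * g⁻¹) = f x := by
  have conj_le : ∀ g x : G, f (g * x * g⁻¹) ≤ f x := fun g x ↦
    le_of_forall_nat_mul_le_mul_add fun n ↦
      calc n * f (g * x * g⁻¹) = f (g * x ^ n * g⁻¹) := by rw [← hf, conj_pow]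
        _ ≤ f g + f (x ^ n) + f g⁻¹ :=
          (map_mul_le_add f _ _).trans (by gcongr; exact map_mul_le_add f _ _)
        _ = n * f x + 2 * f g := by rw [hf, map_inv_eq_map]; ring
  refine (conj_le g x).antisymm ?_
  simpa [mul_assoc] using conj_le g⁻¹ (g * x * g⁻¹)

theorem map_mul_comm (hf : IsHomogeneous f) (x y : G) : f (x * y) = f (y * x) := by
  simpa [mul_assoc] using (map_conj hf y (x * y)).symm

theorem map_mul_conj_le (hf : IsHomogeneous f) (x y g : G) :
    f (x * (g * y * g⁻¹)) ≤ f (x * y) + 2 * f g :=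
  calc f (x * (g * y * g⁻¹)) = f (y * g⁻¹ * x * g) := by
        rw [map_mul_comm hf x, ← map_conj hf g (y * g⁻¹ * x * g)]; group
    _ ≤ f (y * g⁻¹ * x) + f g := map_mul_le_add f _ _
    _ = f (x * y * g⁻¹) + f g := by rw [map_mul_comm hf (y * g⁻¹), ← mul_assoc]
    _ ≤ f (x * y) + 2 * f g := by linarith [map_mul_le_add f (x * y) g⁻¹, map_inv_eq_map f g]

theorem map_pow_mul_pow_le (hf : IsHomogeneous f) (x y : G) (n : ℕ) :
    f (x ^ n * y ^ n) ≤ n * f (x * y) := by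
  induction n with
  | zero => simp
  | succ n ih =>
    calc f (x ^ (n + 1) * y ^ (n + 1)) = f (x * y * (y ^ n * x ^ n)) := by
          rw [pow_succ, pow_succ', mul_assoc, map_mul_comm hf]; simp only [mul_assoc]
      _ ≤ f (x * y) + f (y ^ n * x ^ n) := map_mul_le_add f _ _
      _ = f (x * y) + f (x ^ n * y ^ n) := by rw [map_mul_comm hf (y ^ n)]
      _ ≤ (n + 1 : ℕ) * f (x * y) := by push_cast; linarith

theorem two_mul_le_map_mul_conj (hf : IsHomogeneous f) (x t : G) :
    2 * f x ≤ f (x * (t * x * t⁻¹)) :=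
  le_of_forall_nat_mul_le_mul_add fun n ↦
    calc n * (2 * f x) = f (x ^ n * (t⁻¹ * (t * x * t⁻¹) ^ n * t⁻¹⁻¹)) := by
          rw [conj_pow, show x ^ n * (t⁻¹ * (t * x ^ n * t⁻¹) * t⁻¹⁻¹) = x ^ (2 * n) by group, hf]
          push_cast; ring
      _ ≤ f (x ^ n * (t * x * t⁻¹) ^ n) + 2 * f t⁻¹ := map_mul_conj_le hf _ _ _
      _ ≤ n * f (x * (t * x * t⁻¹)) + 2 * f t := by
          rw [map_inv_eq_map]; linarith [map_pow_mul_pow_le hf x (t * x * t⁻¹) n]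

theorem map_commutatorElement_le (hf : IsHomogeneous f) (a t : G) : f ⁅a, t⁆ ≤ 2 * f a :=
  calc f ⁅a, t⁆ = f (a * (t * a⁻¹ * t⁻¹)) := by rw [commutatorElement_def]; group
    _ ≤ f a + f (t * a⁻¹ * t⁻¹) := map_mul_le_add f _ _
    _ = 2 * f a := by rw [map_conj hf, map_inv_eq_map]; ring

theorem two_mul_map_commutatorElement_le (hf : IsHomogeneous f) (a t : G) :
    2 * f ⁅a, t⁆ ≤ f ⁅a, t ^ 2⁆ := by
  have h := two_mul_le_map_mul_conj hf ⁅a, t⁆ t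
  rwa [show ⁅a, t⁆ * (t * ⁅a, t⁆ * t⁻¹) = ⁅a, t ^ 2⁆ by
    simp only [commutatorElement_def, sq]; group] at h

theorem two_pow_mul_map_commutatorElement_le (hf : IsHomogeneous f) (a b : G) (k : ℕ) :
    2 ^ k * f ⁅a, b⁆ ≤ f ⁅a, b ^ 2 ^ k⁆ := by
  induction k with
  | zero => simp
  | succ k ih =>
    calc 2 ^ (k + 1) * f ⁅a, b⁆ ≤ 2 * f ⁅a, b ^ 2 ^ k⁆ := by rw [pow_succ']; linarith
      _ ≤ f ⁅a, b ^ 2 ^ (k + 1)⁆ := by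
        rw [pow_succ, pow_mul]; exact two_mul_map_commutatorElement_le hf a _

theorem map_commutatorElement_eq_zero (hf : IsHomogeneous f) (a b : G) : f ⁅a, b⁆ = 0 := by
  refine le_antisymm (le_of_forall_nat_mul_le_mul_add (c := 2 * f a) fun k ↦ ?_)
    (apply_nonneg f _)
  calc k * f ⁅a, b⁆ ≤ 2 ^ k * f ⁅a, b⁆ := by gcongr; exact_mod_cast Nat.lt_two_pow_self.le
    _ ≤ f ⁅a, b ^ 2 ^ k⁆ := two_pow_mul_map_commutatorElement_le hf a b k
    _ ≤ k * 0 + 2 * f a := by rw [mul_zero, zero_add]; exact map_commutatorElement_le hf a _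

variable (f) in
def nullSubgroup : Subgroup G where
  carrier := {x | f x = 0}
  one_mem' := map_one_eq_zero f
  mul_mem' {x y} hx hy :=
    le_antisymm ((map_mul_le_add f x y).trans_eq (by simp_all)) (apply_nonneg f _)
  inv_mem' {x} hx := by simpa using hx

theorem commutator_le_nullSubgroup (hf : IsHomogeneous f) : commutator G ≤ nullSubgroup f :=
  Subgroup.commutator_le.2 fun a _ b _ ↦ map_commutatorElement_eq_zero hf a b

end GroupSeminormClass

theorem homogeneous_pseudo_length_vanishes_on_commutator_general {G : Type*} [Group G] (ℓ : G → ℝ)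
    (hone : ℓ 1 = 0)
    (hinv : ∀ x : G, ℓ x⁻¹ = ℓ x)
    (htri : ∀ x y : G, ℓ (x * y) ≤ ℓ x + ℓ y)
    (hhom : ∀ (x : G) (n : ℤ), ℓ (x ^ n) = |(n : ℝ)| * ℓ x) :
    (∀ x ∈ commutator G, ℓ x = 0) ∧
    (∀ x y : G, x * y⁻¹ ∈ commutator G → ℓ x = ℓ y) := by
  let f : GroupSeminorm G := ⟨ℓ, hone, htri, hinv⟩
  have hf : GroupSeminormClass.IsHomogeneous f := fun x n ↦
    show ℓ (x ^ n) = n * ℓ x by simpa using hhom x n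
  have hnull : ∀ x ∈ commutator G, ℓ x = 0 := fun x hx ↦
    GroupSeminormClass.commutator_le_nullSubgroup hf hx
  refine ⟨hnull, fun x y hxy ↦ sub_eq_zero.1 <| abs_nonpos_iff.1 ?_⟩
  exact (abs_sub_map_le_div f x y).trans_eq (hnull _ (div_eq_mul_inv x y ▸ hxy))

/-- A homogeneous pseudo-length function vanishes on the commutator subgroup, and hence
factors through the abelianization. -/
theorem homogeneous_pseudo_length_vanishes_on_commutator {G : Type*} [Group G] (ℓ : G → ℝ)
    (hnonneg : ∀ x : G, 0 ≤ ℓ x)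
    (hone : ℓ 1 = 0)
    (hinv : ∀ x : G, ℓ x⁻¹ = ℓ x)
    (htri : ∀ x y : G, ℓ (x * y) ≤ ℓ x + ℓ y)
    (hhom : ∀ (x : G) (n : ℤ), ℓ (x ^ n) = |(n : ℝ)| * ℓ x) :
    (∀ x ∈ commutator G, ℓ x = 0) ∧
    (∀ x y : G, x * y⁻¹ ∈ commutator G → ℓ x = ℓ y) :=
  homogeneous_pseudo_length_vanishes_on_commutator_general ℓ hone hinv htri hhom
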